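/- arXiv:2208.01592 — 2 statements merged into one kernel-verified Lean document; each statement's English description precedes it below -/
import Mathlib

section
/- Let (N,+) be a group and γ : N → Aut(N) a map satisfying the gamma functional equation γ(x + γ_x(y)) = γ(x)γ(y) for all x, y ∈ N. Then the operation x ∘ y := x + γ_x(y) defines a group structure on N with the same identity element 0, and (N, +, ∘) is a skew left brace, i.e. x ∘ (y+z) = (x∘y) − x + (x∘z) for all x,y,z ∈ N. -/
/-- a gamma function on a group (N,+) induces a skew left brace
structure via x ∘ y = x + γ_x(y). -/
theorem gamma_function_gives_skew_brace
    {N : Type*} [AddGroup N] (γ : N → (N ≃+ N))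
    (hγ : ∀ x y : N, γ (x + γ x y) = (γ y).trans (γ x)) :
    (∀ x y z : N, (x + γ x (y + γ y z)) = ((x + γ x y) + γ (x + γ x y) z)) ∧
    (∀ x : N, 0 + γ 0 x = x) ∧
    (∀ x : N, x + γ x 0 = x) ∧
    (∀ x : N, ∃ y : N, (x + γ x y = 0) ∧ (y + γ y x = 0)) ∧
    (∀ x y z : N, x + γ x (y + z) = (x + γ x y) - x + (x + γ x z)) := by
  have hγ0 : γ 0 = AddEquiv.refl N := by
    have h := hγ 0 0
    simp only [map_zero, add_zero] at h
    ext x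
    have := DFunLike.congr_fun h x
    simp only [AddEquiv.trans_apply] at this
    exact ((γ 0).injective this).symm
  refine ⟨?_, ?_, ?_, ?_, ?_⟩
  · intro x y z
    rw [hγ x y]
    simp [add_assoc]
  · intro x; simp [hγ0]
  · intro x; simp
  · intro x
    refine ⟨(γ x).symm (-x), ?_, ?_⟩
    · simp
    · have h1 : x + γ x ((γ x).symm (-x)) = 0 := by simp
      have h2 : γ ((γ x).symm (-x)) = (γ x).symm := by
        have := hγ x ((γ x).symm (-x))
        rw [h1, hγ0] at this
        ext z
        apply (γ x).injective
        have := DFunLike.congr_fun this z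
        simp only [AddEquiv.refl_apply, AddEquiv.trans_apply] at this
        simp only [AddEquiv.apply_symm_apply]
        exact this.symm
      rw [h2]
      have : (γ x).symm x = (γ x).symm x := rfl
      rw [this]
      simp [← map_add]
  · intro x y z
    simp [map_add, sub_eq_add_neg, add_assoc]
end

section
/- Let p be a prime and N a skew left brace of cardinality p^m. Then N is left nilpotent of class at most m, i.e. N^{m+1} = 0, where N^1 = N and N^{k} = N ⋆ N^{k-1} with X ⋆ Y the additive subgroup generated by {x ⋆ y : x ∈ X, y ∈ Y} and x ⋆ y = γ_x(y) − y. -/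
/-- A skew left brace structure on an additive group `N`. -/
structure SkewBraceStruct (N : Type*) [AddGroup N] where
  circ : N → N → N
  cinv : N → N
  circ_assoc : ∀ x y z, circ (circ x y) z = circ x (circ y z)
  zero_circ : ∀ x, circ 0 x = x
  circ_zero : ∀ x, circ x 0 = x
  cinv_circ : ∀ x, circ (cinv x) x = 0
  circ_cinv : ∀ x, circ x (cinv x) = 0
  brace : ∀ x y z, circ x (y + z) = circ x y - x + circ x z

/-- The gamma function of a skew left brace: γ_x(y) = -x + x∘y. -/
def SkewBraceStruct.gamma {N : Type*} [AddGroup N] (B : SkewBraceStruct N)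
    (x y : N) : N := -x + B.circ x y

/-- The left series of a skew brace: `leftSeries B 0 = N = N^1` and
`leftSeries B k = N^{k+1} = N ⋆ N^k`, where `X ⋆ Y` is the additive subgroup
generated by the elements `x ⋆ y = γ_x(y) - y`. -/
def SkewBraceStruct.leftSeries {N : Type*} [AddGroup N] (B : SkewBraceStruct N) :
    ℕ → AddSubgroup N
  | 0 => ⊤
  | k + 1 => AddSubgroup.closure
      {z | ∃ x : N, ∃ y ∈ B.leftSeries k, z = B.gamma x y - y}

namespace SkewBraceStruct

variable {N : Type*} [AddGroup N] (B : SkewBraceStruct N)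

lemma gamma_add (x y z : N) : B.gamma x (y + z) = B.gamma x y + B.gamma x z := by
  simp only [gamma, B.brace, sub_eq_add_neg, add_assoc]

lemma gamma_zero_right (x : N) : B.gamma x 0 = 0 := by
  simp [gamma, B.circ_zero]

lemma gamma_zero_left (y : N) : B.gamma 0 y = y := by
  simp [gamma, B.zero_circ]

/-- The additive endomorphism `γ_x`. -/
def gammaAddHom (x : N) : N →+ N := AddMonoidHom.mk' (B.gamma x) (B.gamma_add x)

lemma gamma_sub (x y z : N) : B.gamma x (y - z) = B.gamma x y - B.gamma x z :=
  map_sub (B.gammaAddHom x) y z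

lemma circ_neg (x y : N) : B.circ x (-y) = x - B.circ x y + x := by
  have h : B.circ x y - x + B.circ x (-y) = x := by
    have h0 := B.brace x y (-y)
    rw [add_neg_cancel, B.circ_zero] at h0
    exact h0.symm
  have h2 : B.circ x (-y) = -(B.circ x y - x) + x := eq_neg_add_of_add_eq h
  rwa [neg_sub] at h2

lemma gamma_comp (x y z : N) :
    B.gamma (B.circ x y) z = B.gamma x (B.gamma y z) := by
  unfold gamma
  rw [B.brace, B.circ_neg, ← B.circ_assoc]
  simp [sub_eq_add_neg, add_assoc]

/-- The multiplicative group `(N, ∘)` of a skew brace, as a type synonym. -/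
def Grp (_B : SkewBraceStruct N) : Type _ := N

instance : One B.Grp := ⟨(0 : N)⟩
instance : Mul B.Grp := ⟨fun x y => B.circ x y⟩
instance : Inv B.Grp := ⟨fun x => B.cinv x⟩
instance : Group B.Grp :=
  Group.ofLeftAxioms B.circ_assoc B.zero_circ B.cinv_circ

/-- Every element of the left series is mapped into the left series by every `γ_x`. -/
lemma gamma_mem_leftSeries : ∀ k (x : N), ∀ y ∈ B.leftSeries k,
    B.gamma x y ∈ B.leftSeries k := by
  intro k
  induction k with
  | zero => intro x y _; trivial
  | succ k ih =>
    intro x y hy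
    have hle : B.leftSeries (k + 1) ≤
        AddSubgroup.comap (B.gammaAddHom x) (B.leftSeries (k + 1)) := by
      show AddSubgroup.closure _ ≤ _
      rw [AddSubgroup.closure_le]
      rintro z ⟨w, a, ha, rfl⟩
      have h1 : B.gamma (B.circ x w) a - a ∈ B.leftSeries (k + 1) :=
        AddSubgroup.subset_closure ⟨B.circ x w, a, ha, rfl⟩
      have h2 : B.gamma x a - a ∈ B.leftSeries (k + 1) :=
        AddSubgroup.subset_closure ⟨x, a, ha, rfl⟩
      have key : B.gammaAddHom x (B.gamma w a - a) =
          (B.gamma (B.circ x w) a - a) - (B.gamma x a - a) := by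
        show B.gamma x (B.gamma w a - a) = _
        rw [B.gamma_sub, ← B.gamma_comp]
        simp [sub_eq_add_neg, neg_add_rev, add_assoc]
      have : B.gammaAddHom x (B.gamma w a - a) ∈ B.leftSeries (k + 1) := by
        rw [key]; exact AddSubgroup.sub_mem _ h1 h2
      exact AddSubgroup.mem_comap.mpr this
    exact hle hy
  -- (membership in comap unfolds to the desired membership)

lemma leftSeries_succ_le (k : ℕ) : B.leftSeries (k + 1) ≤ B.leftSeries k := by
  show AddSubgroup.closure _ ≤ _
  rw [AddSubgroup.closure_le]
  rintro z ⟨x, y, hy, rfl⟩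
  exact AddSubgroup.sub_mem _ (B.gamma_mem_leftSeries k x y hy) hy

lemma leftSeries_succ_eq_bot_of (k : ℕ) (h : B.leftSeries k = ⊥) :
    B.leftSeries (k + 1) = ⊥ := by
  rw [eq_bot_iff]
  show AddSubgroup.closure _ ≤ _
  rw [AddSubgroup.closure_le]
  rintro z ⟨x, y, hy, rfl⟩
  rw [h, AddSubgroup.mem_bot] at hy
  subst hy
  simp [B.gamma_zero_right]

end SkewBraceStruct

instance AddAut.instGroupOld (A : Type*) [Add A] : Group (AddAut A) where
  mul g h := AddEquiv.trans h g
  one := AddEquiv.refl _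
  inv := AddEquiv.symm
  mul_assoc _ _ _ := rfl
  one_mul _ := rfl
  mul_one _ := rfl
  inv_mul_cancel := AddEquiv.self_trans_symm

open scoped commutatorElement in
/-- Key abstract lemma: if a `p`-group acts on a `p`-group `A` by automorphisms and
the displacements `φ g a - a` generate all of `A`, then `A` is trivial. -/
lemma key_subsingleton {G A : Type*} [Group G] [AddGroup A]
    (p : ℕ) (hp : p.Prime) (a b : ℕ)
    (hG : Nat.card G = p ^ a) (hA : Nat.card A = p ^ b)
    (φ : G →* AddAut A)
    (hgen : AddSubgroup.closure {z : A | ∃ g : G, ∃ y : A, z = φ g y - y} = ⊤) :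
    Subsingleton A := by
  haveI : Fact p.Prime := ⟨hp⟩
  haveI hfA : Finite A :=
    Nat.finite_of_card_ne_zero (by rw [hA]; exact pow_ne_zero _ hp.pos.ne')
  haveI hfG : Finite G :=
    Nat.finite_of_card_ne_zero (by rw [hG]; exact pow_ne_zero _ hp.pos.ne')
  -- pass to the multiplicative version of A
  let M := Multiplicative A
  let ψ : AddAut A →* MulAut M :=
    { toFun := fun e => AddEquiv.toMultiplicative e
      map_one' := MulEquiv.ext fun _ => rfl
      map_mul' := fun e f => MulEquiv.ext fun _ => rfl }
  let φ' : G →* MulAut M := ψ.comp φ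
  let P := SemidirectProduct M G φ'
  let e : P ≃ M × G :=
    { toFun := fun x => (x.left, x.right)
      invFun := fun q => ⟨q.1, q.2⟩
      left_inv := fun x => rfl
      right_inv := fun q => rfl }
  haveI : Finite P := Finite.of_equiv _ e.symm
  have hcardP : Nat.card P = p ^ (b + a) := by
    rw [Nat.card_congr e, Nat.card_prod, pow_add]
    have h1 : Nat.card M = Nat.card A := rfl
    rw [h1, hA, hG]
  have hP : IsPGroup p P := IsPGroup.of_card hcardP
  haveI : Group.IsNilpotent P := hP.isNilpotent
  obtain ⟨n, hn⟩ := nilpotent_iff_lowerCentralSeries.mp this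
  let H : Subgroup P := (SemidirectProduct.inl : M →* P).range
  let K : Subgroup P := ⁅(⊤ : Subgroup P), H⁆
  -- the displacement hypothesis forces H ≤ ⁅⊤, H⁆
  have hHle : H ≤ K := by
    rintro _ ⟨mval, rfl⟩
    let D : AddSubgroup A :=
      { carrier := {x : A | (SemidirectProduct.inl (Multiplicative.ofAdd x) : P) ∈ K}
        zero_mem' := by
          show (SemidirectProduct.inl (Multiplicative.ofAdd (0:A)) : P) ∈ K
          have h1 : Multiplicative.ofAdd (0:A) = (1 : M) := rfl
          rw [h1, map_one]
          exact Subgroup.one_mem _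
        add_mem' := by
          intro x y hx hy
          show (SemidirectProduct.inl (Multiplicative.ofAdd (x + y)) : P) ∈ K
          have h1 : Multiplicative.ofAdd (x + y) =
              Multiplicative.ofAdd x * Multiplicative.ofAdd y := rfl
          rw [h1, map_mul]
          exact Subgroup.mul_mem _ hx hy
        neg_mem' := by
          intro x hx
          show (SemidirectProduct.inl (Multiplicative.ofAdd (-x)) : P) ∈ K
          have h1 : Multiplicative.ofAdd (-x) = (Multiplicative.ofAdd x)⁻¹ := rfl
          rw [h1, map_inv]
          exact Subgroup.inv_mem _ hx }
    have hDtop : D = ⊤ := by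
      rw [eq_top_iff, ← hgen, AddSubgroup.closure_le]
      rintro _ ⟨g, y, rfl⟩
      show (SemidirectProduct.inl (Multiplicative.ofAdd (φ g y - y)) : P) ∈ K
      have heq : (SemidirectProduct.inl (Multiplicative.ofAdd (φ g y - y)) : P) =
          ⁅(SemidirectProduct.inr g : P), (SemidirectProduct.inl (Multiplicative.ofAdd y) : P)⁆ := by
        have h1 : Multiplicative.ofAdd (φ g y - y) =
            φ' g (Multiplicative.ofAdd y) * (Multiplicative.ofAdd y)⁻¹ := by
          rw [sub_eq_add_neg]; rfl
        rw [h1, map_mul, map_inv, SemidirectProduct.inl_aut]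
        rw [commutatorElement_def, map_inv]
      rw [heq]
      exact Subgroup.commutator_mem_commutator (Subgroup.mem_top _) ⟨_, rfl⟩
    have hm : mval ∈ D := hDtop ▸ AddSubgroup.mem_top (Multiplicative.toAdd mval)
    exact hm
  -- hence H sits inside every term of the lower central series
  have hchain : ∀ k, H ≤ (⊤ : Subgroup P).lowerCentralSeries k := by
    intro k
    induction k with
    | zero => exact le_top
    | succ k ih =>
      have h1 : H ≤ ⁅H, (⊤ : Subgroup P)⁆ := by
        rw [Subgroup.commutator_comm]; exact hHle
      have h2 : ⁅H, (⊤ : Subgroup P)⁆ ≤ ⁅(⊤ : Subgroup P).lowerCentralSeries k, (⊤ : Subgroup P)⁆ :=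
        Subgroup.commutator_mono ih le_rfl
      exact h1.trans h2
  have hbot : H ≤ ⊥ := hn ▸ hchain n
  refine ⟨fun x y => ?_⟩
  have hx : (SemidirectProduct.inl (Multiplicative.ofAdd x) : P) = 1 :=
    Subgroup.mem_bot.mp (hbot ⟨_, rfl⟩)
  have hy : (SemidirectProduct.inl (Multiplicative.ofAdd y) : P) = 1 :=
    Subgroup.mem_bot.mp (hbot ⟨_, rfl⟩)
  have := SemidirectProduct.inl_injective (hx.trans hy.symm)
  exact Multiplicative.ofAdd.injective this

namespace SkewBraceStruct

variable {N : Type*} [AddGroup N] (B : SkewBraceStruct N)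

/-- `γ` restricted to an invariant subgroup, as a homomorphism `(N,∘) →* AddAut S`. -/
def gammaRes (k : ℕ) : B.Grp →* AddAut ↥(B.leftSeries k) :=
  MonoidHom.mk'
    (fun x =>
      { toFun := fun s => ⟨B.gamma x s, B.gamma_mem_leftSeries k x s s.2⟩
        invFun := fun s => ⟨B.gamma (B.cinv x) s, B.gamma_mem_leftSeries k _ s s.2⟩
        left_inv := fun s => Subtype.ext (by
          show B.gamma (B.cinv x) (B.gamma x s) = (s : N)
          erw [← B.gamma_comp, B.cinv_circ, B.gamma_zero_left])
        right_inv := fun s => Subtype.ext (by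
          show B.gamma x (B.gamma (B.cinv x) s) = (s : N)
          erw [← B.gamma_comp, B.circ_cinv, B.gamma_zero_left])
        map_add' := fun s t => Subtype.ext (B.gamma_add x s t) })
    (fun x y => by
      ext s
      exact B.gamma_comp x y s)

lemma leftSeries_strict_descent (p m : ℕ) (hp : p.Prime)
    (hcard : Nat.card N = p ^ m) (k : ℕ) (hk : B.leftSeries k ≠ ⊥) :
    B.leftSeries (k + 1) ≠ B.leftSeries k := by
  haveI : Fact p.Prime := ⟨hp⟩
  haveI hfN : Finite N :=
    Nat.finite_of_card_ne_zero (by rw [hcard]; exact pow_ne_zero _ hp.pos.ne')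
  intro hEq
  -- the subgroup is a p-group
  obtain ⟨b, _, hb⟩ := (Nat.dvd_prime_pow hp).mp
    (hcard ▸ AddSubgroup.card_addSubgroup_dvd_card (B.leftSeries k))
  -- the generating hypothesis inside S
  have hgen : AddSubgroup.closure
      {z : ↥(B.leftSeries k) | ∃ g : B.Grp, ∃ y : ↥(B.leftSeries k),
        z = (B.gammaRes k) g y - y} = ⊤ := by
    apply AddSubgroup.map_injective (B.leftSeries k).subtype_injective
    rw [AddMonoidHom.map_closure]
    have himg : (B.leftSeries k).subtype ''
        {z : ↥(B.leftSeries k) | ∃ g : B.Grp, ∃ y : ↥(B.leftSeries k),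
          z = (B.gammaRes k) g y - y}
        = {z : N | ∃ x : N, ∃ y ∈ B.leftSeries k, z = B.gamma x y - y} := by
      ext z
      constructor
      · rintro ⟨w, ⟨g, y, rfl⟩, rfl⟩
        exact ⟨g, y, y.2, rfl⟩
      · rintro ⟨x, y, hy, rfl⟩
        exact ⟨(B.gammaRes k) x ⟨y, hy⟩ - ⟨y, hy⟩, ⟨x, ⟨y, hy⟩, rfl⟩, rfl⟩
    rw [himg]
    have h1 : AddSubgroup.closure {z : N | ∃ x : N, ∃ y ∈ B.leftSeries k,
        z = B.gamma x y - y} = B.leftSeries (k + 1) := rfl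
    rw [h1, hEq, ← AddMonoidHom.range_eq_map, AddSubgroup.range_subtype]
  have hsub : Subsingleton ↥(B.leftSeries k) := by
    refine key_subsingleton p hp m b ?_ hb (B.gammaRes k) hgen
    exact hcard
  apply hk
  rw [eq_bot_iff]
  intro x hx
  have h0 : (⟨x, hx⟩ : ↥(B.leftSeries k)) = ⟨0, (B.leftSeries k).zero_mem⟩ :=
    Subsingleton.elim _ _
  simpa using congrArg Subtype.val h0

end SkewBraceStruct

/-- a skew left brace of cardinality p^m is left nilpotent of class
at most m, i.e. N^{m+1} = 0. -/
theorem left_nilpotent_of_prime_power_card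
    {N : Type*} [AddGroup N] (B : SkewBraceStruct N)
    (p m : ℕ) (hp : p.Prime) (hcard : Nat.card N = p ^ m) :
    B.leftSeries m = ⊥ := by
  haveI : Fact p.Prime := ⟨hp⟩
  haveI hfN : Finite N :=
    Nat.finite_of_card_ne_zero (by rw [hcard]; exact pow_ne_zero _ hp.pos.ne')
  have main : ∀ k, B.leftSeries k = ⊥ ∨ p ^ k * Nat.card ↥(B.leftSeries k) ∣ p ^ m := by
    intro k
    induction k with
    | zero =>
      right
      have h0 : Nat.card ↥(B.leftSeries 0) = Nat.card N := by
        show Nat.card ↥(⊤ : AddSubgroup N) = Nat.card N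
        exact AddSubgroup.card_top
      rw [pow_zero, one_mul, h0, hcard]
    | succ k ih =>
      rcases ih with hbot | hdvd
      · exact Or.inl (B.leftSeries_succ_eq_bot_of k hbot)
      by_cases hkbot : B.leftSeries k = ⊥
      · exact Or.inl (B.leftSeries_succ_eq_bot_of k hkbot)
      right
      have hne := B.leftSeries_strict_descent p m hp hcard k hkbot
      have hle := B.leftSeries_succ_le k
      have hlt : B.leftSeries (k + 1) < B.leftSeries k := lt_of_le_of_ne hle hne
      have hcardlt : Nat.card ↥(B.leftSeries (k + 1)) < Nat.card ↥(B.leftSeries k) := by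
        have e1 : Nat.card ↥(B.leftSeries (k + 1))
            = ((B.leftSeries (k + 1) : Set N)).ncard := Nat.card_coe_set_eq _
        have e2 : Nat.card ↥(B.leftSeries k)
            = ((B.leftSeries k : Set N)).ncard := Nat.card_coe_set_eq _
        rw [e1, e2]
        exact Set.ncard_lt_ncard (SetLike.coe_ssubset_coe.mpr hlt) (Set.toFinite _)
      obtain ⟨i, _, hi⟩ := (Nat.dvd_prime_pow hp).mp
        (hcard ▸ AddSubgroup.card_addSubgroup_dvd_card (B.leftSeries k))
      obtain ⟨j, _, hj⟩ := (Nat.dvd_prime_pow hp).mp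
        (hcard ▸ AddSubgroup.card_addSubgroup_dvd_card (B.leftSeries (k + 1)))
      have hji : j < i := by
        rw [hi, hj] at hcardlt
        exact (Nat.pow_lt_pow_iff_right hp.one_lt).mp hcardlt
      have hstep : p * Nat.card ↥(B.leftSeries (k + 1)) ∣ Nat.card ↥(B.leftSeries k) := by
        rw [hi, hj, ← pow_succ']
        exact pow_dvd_pow p hji
      calc p ^ (k + 1) * Nat.card ↥(B.leftSeries (k + 1))
          = p ^ k * (p * Nat.card ↥(B.leftSeries (k + 1))) := by ring
        _ ∣ p ^ k * Nat.card ↥(B.leftSeries k) := mul_dvd_mul_left _ hstep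
        _ ∣ p ^ m := hdvd
  rcases main m with h | h
  · exact h
  · have hpos : 0 < p ^ m := pow_pos hp.pos m
    have hc : Nat.card ↥(B.leftSeries m) ∣ 1 := by
      have h2 : p ^ m * Nat.card ↥(B.leftSeries m) ∣ p ^ m * 1 := by
        rw [mul_one]; exact h
      exact (Nat.mul_dvd_mul_iff_left hpos).mp h2
    exact AddSubgroup.eq_bot_of_card_eq _ (Nat.eq_one_of_dvd_one hc)
end
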